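/- For every integer n ≥ 2 and every d ∈ D, the function z ↦ log a(z; d) is Lebesgue integrable on (0,1); in particular W(d) is finite. (This is the key fact behind the claim that the adversarial noise distribution F*(·; d) has bounded support for every d ∈ D.) -/

import Mathlib

open MeasureTheory Finset

/-- The function `a(z; d)` from the tournament model. -/
noncomputable def aFun (n : ℕ) (d : ℕ → ℝ) (z : ℝ) : ℝ :=
  ∑ r ∈ Finset.Icc 1 (n - 1),
    (r : ℝ) * ((n - 1).choose r : ℝ) * z ^ (n - r - 1) * (1 - z) ^ (r - 1) * d r

/-- The feasible set `D` of prize-differential vectors. -/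
def feasible (n : ℕ) (d : ℕ → ℝ) : Prop :=
  (∀ r ∈ Finset.Icc 1 (n - 1), 0 ≤ d r) ∧
    ∑ r ∈ Finset.Icc 1 (n - 1), (r : ℝ) * d r = 1

lemma norm_log_le_aux {x : ℝ} (hx : x ∈ Set.Ioc (0:ℝ) 1) :
    ‖Real.log x‖ ≤ 2 * x ^ (-(1/2) : ℝ) := by
  obtain ⟨h0, h1⟩ := hx
  have hlog : Real.log x ≤ 0 := Real.log_nonpos h0.le h1
  have hs : (0:ℝ) < Real.sqrt x := Real.sqrt_pos.2 h0
  have h2 : 1 - (Real.sqrt x)⁻¹ ≤ Real.log (Real.sqrt x) :=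
    Real.one_sub_inv_le_log_of_pos hs
  have h3 : Real.log (Real.sqrt x) = Real.log x / 2 := Real.log_sqrt h0.le
  have h4 : (Real.sqrt x)⁻¹ = x ^ (-(1/2) : ℝ) := by
    rw [Real.sqrt_eq_rpow, ← Real.rpow_neg h0.le]
  rw [Real.norm_eq_abs, abs_of_nonpos hlog]
  rw [h3] at h2
  rw [← h4]
  nlinarith [inv_pos.2 hs]

lemma intervalIntegrable_log01 : IntervalIntegrable Real.log MeasureTheory.volume 0 1 := by
  rw [intervalIntegrable_iff_integrableOn_Ioc_of_le (by norm_num : (0:ℝ) ≤ 1)]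
  have hg : IntegrableOn (fun x : ℝ => 2 * x ^ (-(1/2) : ℝ)) (Set.Ioc 0 1) volume := by
    have := (intervalIntegral.intervalIntegrable_rpow' (a := 0) (b := 1)
      (r := -(1/2)) (by norm_num)).const_mul 2
    rwa [intervalIntegrable_iff_integrableOn_Ioc_of_le (by norm_num : (0:ℝ) ≤ 1)] at this
  refine Integrable.mono' hg (Real.measurable_log.aestronglyMeasurable.restrict) ?_
  filter_upwards [MeasureTheory.ae_restrict_mem measurableSet_Ioc] with x hx
  exact norm_log_le_aux hx

lemma integrableOn_log_Ioo : IntegrableOn Real.log (Set.Ioo (0:ℝ) 1) volume := by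
  have := intervalIntegrable_log01
  rw [intervalIntegrable_iff_integrableOn_Ioc_of_le (by norm_num : (0:ℝ) ≤ 1)] at this
  exact this.mono_set Set.Ioo_subset_Ioc_self

lemma integrableOn_log_one_sub : IntegrableOn (fun z => Real.log (1 - z)) (Set.Ioo (0:ℝ) 1) volume := by
  have := intervalIntegrable_log01.comp_sub_left 1
  simp only [sub_zero, sub_self] at this
  replace this := this.symm
  rw [intervalIntegrable_iff_integrableOn_Ioc_of_le (by norm_num : (0:ℝ) ≤ 1)] at this
  exact this.mono_set Set.Ioo_subset_Ioc_self

/-- For every `n ≥ 2` and every `d ∈ D`, the function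
`z ↦ log a(z; d)` is Lebesgue integrable on `(0,1)`; in particular
`W(d) = ∫₀¹ log a(z; d) dz` is finite. -/
theorem log_aFun_integrable (n : ℕ) (hn : 2 ≤ n) (d : ℕ → ℝ) (hd : feasible n d) :
    IntegrableOn (fun z => Real.log (aFun n d z)) (Set.Ioo (0:ℝ) 1) := by
  obtain ⟨hd0, hdsum⟩ := hd
  -- find an index with positive d
  have hex : ∃ r0 ∈ Finset.Icc 1 (n-1), 0 < d r0 := by
    by_contra h
    push_neg at h
    have : ∑ r ∈ Finset.Icc 1 (n - 1), (r : ℝ) * d r = 0 := by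
      apply Finset.sum_eq_zero
      intro r hr
      have h1 := hd0 r hr
      have h2 := h r hr
      have : d r = 0 := le_antisymm h2 h1
      simp [this]
    rw [this] at hdsum; norm_num at hdsum
  obtain ⟨r0, hr0mem, hr0pos⟩ := hex
  obtain ⟨hr01, hr0n⟩ := Finset.mem_Icc.mp hr0mem
  set c : ℝ := (r0 : ℝ) * ((n - 1).choose r0 : ℝ) * d r0 with hc
  have hchoosepos : 0 < ((n - 1).choose r0 : ℝ) := by
    exact_mod_cast Nat.choose_pos hr0n
  have hcpos : 0 < c := by
    apply mul_pos (mul_pos _ hchoosepos) hr0pos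
    exact_mod_cast Nat.lt_of_lt_of_le Nat.zero_lt_one hr01
  set M : ℝ := ∑ r ∈ Finset.Icc 1 (n - 1), (r : ℝ) * ((n - 1).choose r : ℝ) * d r with hM
  have hMc : c ≤ M := by
    refine Finset.single_le_sum (f := fun r : ℕ => (r : ℝ) * ((n - 1).choose r : ℝ) * d r)
      (fun r hr => ?_) hr0mem
    have := hd0 r hr
    positivity
  have hMpos : 0 < M := lt_of_lt_of_le hcpos hMc
  -- bounds on aFun
  have hub : ∀ z ∈ Set.Ioo (0:ℝ) 1, aFun n d z ≤ M := by
    intro z hz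
    obtain ⟨hz0, hz1⟩ := hz
    apply Finset.sum_le_sum
    intro r hr
    have hdr := hd0 r hr
    have h1 : z ^ (n - r - 1) ≤ 1 := pow_le_one₀ hz0.le hz1.le
    have h2 : (1 - z) ^ (r - 1) ≤ 1 := pow_le_one₀ (by linarith) (by linarith)
    have hrpos : (0:ℝ) ≤ (r : ℝ) * ((n - 1).choose r : ℝ) := by positivity
    calc (r : ℝ) * ((n - 1).choose r : ℝ) * z ^ (n - r - 1) * (1 - z) ^ (r - 1) * d r
        ≤ (r : ℝ) * ((n - 1).choose r : ℝ) * 1 * 1 * d r := by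
          apply mul_le_mul_of_nonneg_right _ hdr
          apply mul_le_mul _ h2 (pow_nonneg (by linarith) _) (by positivity)
          apply mul_le_mul_of_nonneg_left h1 hrpos
      _ = (r : ℝ) * ((n - 1).choose r : ℝ) * d r := by ring
  have hlb : ∀ z ∈ Set.Ioo (0:ℝ) 1,
      c * (z ^ (n - 2) * (1 - z) ^ (n - 2)) ≤ aFun n d z := by
    intro z hz
    obtain ⟨hz0, hz1⟩ := hz
    have key : c * (z ^ (n - 2) * (1 - z) ^ (n - 2)) ≤
        (r0 : ℝ) * ((n - 1).choose r0 : ℝ) * z ^ (n - r0 - 1) * (1 - z) ^ (r0 - 1) * d r0 := by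
      have h1 : z ^ (n - 2) ≤ z ^ (n - r0 - 1) :=
        pow_le_pow_of_le_one hz0.le hz1.le (by omega)
      have h2 : (1 - z) ^ (n - 2) ≤ (1 - z) ^ (r0 - 1) :=
        pow_le_pow_of_le_one (by linarith) (by linarith) (by omega)
      calc c * (z ^ (n - 2) * (1 - z) ^ (n - 2))
          ≤ c * (z ^ (n - r0 - 1) * (1 - z) ^ (r0 - 1)) := by
            apply mul_le_mul_of_nonneg_left _ hcpos.le
            apply mul_le_mul h1 h2 (pow_nonneg (by linarith) _) (pow_nonneg hz0.le _)
        _ = (r0 : ℝ) * ((n - 1).choose r0 : ℝ) * z ^ (n - r0 - 1) * (1 - z) ^ (r0 - 1) * d r0 := by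
            rw [hc]; ring
    refine key.trans ?_
    refine Finset.single_le_sum (f := fun r : ℕ =>
      (r : ℝ) * ((n - 1).choose r : ℝ) * z ^ (n - r - 1) * (1 - z) ^ (r - 1) * d r)
      (fun r hr => ?_) hr0mem
    have := hd0 r hr
    have : (0:ℝ) ≤ 1 - z := by linarith
    have := hd0 r hr
    positivity
  have hapos : ∀ z ∈ Set.Ioo (0:ℝ) 1, 0 < aFun n d z := by
    intro z hz
    refine lt_of_lt_of_le ?_ (hlb z hz)
    obtain ⟨hz0, hz1⟩ := hz
    have : (0:ℝ) < 1 - z := by linarith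
    positivity
  -- dominating function
  set g : ℝ → ℝ := fun z => |Real.log M| + |Real.log c| +
      (n - 2 : ℕ) * (|Real.log z| + |Real.log (1 - z)|) with hg
  have hgi : IntegrableOn g (Set.Ioo (0:ℝ) 1) volume := by
    apply Integrable.add
    · exact integrableOn_const (by simp [Real.volume_Ioo])
    · exact (((integrableOn_log_Ioo.norm).add (integrableOn_log_one_sub.norm)).const_mul _)
  -- measurability
  have hmeas : AEStronglyMeasurable (fun z => Real.log (aFun n d z))
      (volume.restrict (Set.Ioo (0:ℝ) 1)) := by
    apply Measurable.aestronglyMeasurable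
    apply Real.measurable_log.comp
    apply Continuous.measurable
    unfold aFun
    fun_prop
  refine Integrable.mono' hgi hmeas ?_
  filter_upwards [MeasureTheory.ae_restrict_mem measurableSet_Ioo] with z hz
  obtain ⟨hz0, hz1⟩ := hz
  have h1z : (0:ℝ) < 1 - z := by linarith
  have hap := hapos z ⟨hz0, hz1⟩
  have hupper : Real.log (aFun n d z) ≤ Real.log M :=
    Real.log_le_log hap (hub z ⟨hz0, hz1⟩)
  have hlower : Real.log c + ((n-2 : ℕ) : ℝ) * (Real.log z + Real.log (1 - z)) ≤
      Real.log (aFun n d z) := by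
    have hprod : 0 < z ^ (n - 2) * (1 - z) ^ (n - 2) :=
      mul_pos (pow_pos hz0 _) (pow_pos h1z _)
    have h := Real.log_le_log (mul_pos hcpos hprod) (hlb z ⟨hz0, hz1⟩)
    rw [Real.log_mul hcpos.ne' hprod.ne',
      Real.log_mul (pow_pos hz0 _).ne' (pow_pos h1z _).ne',
      Real.log_pow, Real.log_pow] at h
    linarith
  rw [Real.norm_eq_abs, abs_le]
  constructor
  · have hn2 : (0:ℝ) ≤ ((n-2 : ℕ) : ℝ) := by positivity
    have hlz : Real.log z ≤ 0 := Real.log_nonpos hz0.le hz1.le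
    have hl1z : Real.log (1 - z) ≤ 0 := Real.log_nonpos h1z.le (by linarith)
    have h1 : -|Real.log c| ≤ Real.log c := neg_abs_le _
    have h2 : ((n-2 : ℕ) : ℝ) * (Real.log z + Real.log (1 - z)) ≥
        -(((n-2 : ℕ) : ℝ) * (|Real.log z| + |Real.log (1 - z)|)) := by
      rw [abs_of_nonpos hlz, abs_of_nonpos hl1z]
      nlinarith
    have h3 : (0:ℝ) ≤ |Real.log M| := abs_nonneg _
    simp only [hg]
    nlinarith [hlower]
  · have h1 : Real.log M ≤ |Real.log M| := le_abs_self _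
    have h2 : (0:ℝ) ≤ |Real.log c| := abs_nonneg _
    have h3 : (0:ℝ) ≤ ((n-2:ℕ):ℝ) * (|Real.log z| + |Real.log (1 - z)|) := by positivity
    simp only [hg]
    linarith [hupper]
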